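/- Let Q be a strictly positive probability distribution on a finite set, s a centered function (E_Q[s] = 0), and Q_s the exponential tilting of Q by s. Then KL(Q‖Q_s) = (1/2)‖s‖²_{L²(Q)} + O(‖s‖³_{L²(Q)}) as ‖s‖_{L²(Q)} → 0; more precisely, there exists a constant C (depending only on the minimum mass of Q and an a priori bound on ‖s‖_∞) such that |KL(Q‖Q_s) − (1/2)E_Q[s²]| ≤ C · (E_Q[s²])^{3/2}. -/

import Mathlib

open Real BigOperators Finset

open Real BigOperators Finset

/-- If a differentiable function vanishes at 0 and has nonneg derivative on `[0,∞)`,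
it is nonnegative there. -/
lemma aux_nonneg_of_deriv (f : ℝ → ℝ) (hf : Differentiable ℝ f) (h0 : f 0 = 0)
    (hd : ∀ t, 0 < t → 0 ≤ deriv f t) : ∀ x, 0 ≤ x → 0 ≤ f x := by
  intro x hx
  have hmono : MonotoneOn f (Set.Ici 0) := by
    apply monotoneOn_of_deriv_nonneg (convex_Ici 0) hf.continuous.continuousOn
      hf.differentiableOn
    intro t ht
    rw [interior_Ici] at ht
    exact hd t ht
  have := hmono (Set.mem_Ici.2 le_rfl) (Set.mem_Ici.2 hx) hx
  linarith [h0 ▸ this]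

lemma exp_sub_one_le (B : ℝ) {x : ℝ} (h0 : 0 ≤ x) (hxB : x ≤ B) :
    Real.exp x - 1 ≤ Real.exp B * x := by
  have key : ∀ y, 0 ≤ y → 0 ≤ Real.exp B * y - (Real.exp y - 1) ∨ True := fun _ _ => Or.inr trivial
  have hD : ∀ t, HasDerivAt (fun t => Real.exp B * t - (Real.exp t - 1)) (Real.exp B - Real.exp t) t := by
    intro t
    simpa [Pi.sub_def] using ((hasDerivAt_id t).const_mul (Real.exp B)).sub ((Real.hasDerivAt_exp t).sub_const 1)
  -- restrict to [0, B] via monotoneOn on Icc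
  have hmono : MonotoneOn (fun t => Real.exp B * t - (Real.exp t - 1)) (Set.Icc 0 B) := by
    apply monotoneOn_of_deriv_nonneg (convex_Icc 0 B)
      (Continuous.continuousOn (by continuity))
      (fun t _ => ((hD t).differentiableAt).differentiableWithinAt)
    intro t ht
    rw [interior_Icc] at ht
    rw [(hD t).deriv]
    have := Real.exp_le_exp.2 ht.2.le
    linarith
  have hB0 : (0:ℝ) ≤ B := le_trans h0 hxB
  have := hmono (Set.mem_Icc.2 ⟨le_rfl, hB0⟩) (Set.mem_Icc.2 ⟨h0, hxB⟩) h0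
  simp only [mul_zero, Real.exp_zero] at this
  linarith

lemma exp_quad_le (B : ℝ) {x : ℝ} (h0 : 0 ≤ x) (hxB : x ≤ B) :
    Real.exp x - 1 - x ≤ Real.exp B * x ^ 2 / 2 := by
  have hD : ∀ t, HasDerivAt (fun t => Real.exp B * t ^ 2 / 2 - (Real.exp t - 1 - t))
      (Real.exp B * t - (Real.exp t - 1)) t := by
    intro t
    have h1 : HasDerivAt (fun t : ℝ => t ^ 2) (2 * t) t := by
      simpa using hasDerivAt_pow 2 t
    have h2 := ((h1.const_mul (Real.exp B)).div_const 2).sub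
      (((Real.hasDerivAt_exp t).sub_const 1).sub (hasDerivAt_id t))
    exact h2.congr_deriv (by ring)
  have hmono : MonotoneOn (fun t => Real.exp B * t ^ 2 / 2 - (Real.exp t - 1 - t)) (Set.Icc 0 B) := by
    apply monotoneOn_of_deriv_nonneg (convex_Icc 0 B)
      (Continuous.continuousOn (by continuity))
      (fun t _ => ((hD t).differentiableAt).differentiableWithinAt)
    intro t ht
    rw [interior_Icc] at ht
    rw [(hD t).deriv]
    linarith [exp_sub_one_le B ht.1.le ht.2.le]
  have hB0 : (0:ℝ) ≤ B := le_trans h0 hxB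
  have := hmono (Set.mem_Icc.2 ⟨le_rfl, hB0⟩) (Set.mem_Icc.2 ⟨h0, hxB⟩) h0
  simp only [ne_eq, OfNat.ofNat_ne_zero, not_false_eq_true, zero_pow, mul_zero, zero_div,
    Real.exp_zero] at this
  linarith

lemma exp_cubic_le (B : ℝ) {x : ℝ} (h0 : 0 ≤ x) (hxB : x ≤ B) :
    Real.exp x - 1 - x - x ^ 2 / 2 ≤ Real.exp B * x ^ 3 / 6 := by
  have hD : ∀ t, HasDerivAt (fun t => Real.exp B * t ^ 3 / 6 - (Real.exp t - 1 - t - t ^ 2 / 2))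
      (Real.exp B * t ^ 2 / 2 - (Real.exp t - 1 - t)) t := by
    intro t
    have h1 : HasDerivAt (fun t : ℝ => t ^ 3) (3 * t ^ 2) t := by
      simpa using hasDerivAt_pow 3 t
    have h2 : HasDerivAt (fun t : ℝ => t ^ 2) (2 * t) t := by
      simpa using hasDerivAt_pow 2 t
    have h3 := ((h1.const_mul (Real.exp B)).div_const 6).sub
      ((((Real.hasDerivAt_exp t).sub_const 1).sub (hasDerivAt_id t)).sub (h2.div_const 2))
    exact h3.congr_deriv (by ring)
  have hmono : MonotoneOn (fun t => Real.exp B * t ^ 3 / 6 - (Real.exp t - 1 - t - t ^ 2 / 2))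
      (Set.Icc 0 B) := by
    apply monotoneOn_of_deriv_nonneg (convex_Icc 0 B)
      (Continuous.continuousOn (by continuity))
      (fun t _ => ((hD t).differentiableAt).differentiableWithinAt)
    intro t ht
    rw [interior_Icc] at ht
    rw [(hD t).deriv]
    linarith [exp_quad_le B ht.1.le ht.2.le]
  have hB0 : (0:ℝ) ≤ B := le_trans h0 hxB
  have := hmono (Set.mem_Icc.2 ⟨le_rfl, hB0⟩) (Set.mem_Icc.2 ⟨h0, hxB⟩) h0
  simp only [ne_eq, OfNat.ofNat_ne_zero, not_false_eq_true, zero_pow, mul_zero, zero_div,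
    Real.exp_zero] at this
  linarith

/-- for `x ≥ 0`: `exp x ≥ 1 + x + x²/2`. -/
lemma exp_ge_quad {x : ℝ} (h0 : 0 ≤ x) : 1 + x + x ^ 2 / 2 ≤ Real.exp x := by
  have := aux_nonneg_of_deriv (fun t => Real.exp t - 1 - t - t ^ 2 / 2)
    (by fun_prop) (by simp)
    (fun t ht => by
      have hD : HasDerivAt (fun t : ℝ => Real.exp t - 1 - t - t ^ 2 / 2)
          (Real.exp t - 1 - t) t := by
        have h2 : HasDerivAt (fun t : ℝ => t ^ 2) (2 * t) t := by
          simpa using hasDerivAt_pow 2 t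
        have h3 := (((Real.hasDerivAt_exp t).sub_const 1).sub (hasDerivAt_id t)).sub
          (h2.div_const 2)
        exact h3.congr_deriv (by ring)
      rw [hD.deriv]
      nlinarith [Real.add_one_le_exp t]) x h0
  linarith

/-- for `y ≥ 0`: `exp (-y) ≤ 1 - y + y²/2`. -/
lemma exp_neg_le_quad {y : ℝ} (h0 : 0 ≤ y) : Real.exp (-y) ≤ 1 - y + y ^ 2 / 2 := by
  have := aux_nonneg_of_deriv (fun t => 1 - t + t ^ 2 / 2 - Real.exp (-t))
    (by fun_prop) (by simp)
    (fun t ht => by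
      have hD : HasDerivAt (fun t : ℝ => 1 - t + t ^ 2 / 2 - Real.exp (-t))
          (-1 + t + Real.exp (-t)) t := by
        have h2 : HasDerivAt (fun t : ℝ => t ^ 2) (2 * t) t := by
          simpa using hasDerivAt_pow 2 t
        have he : HasDerivAt (fun t : ℝ => Real.exp (-t)) (-Real.exp (-t)) t := by
          simpa [Function.comp_def] using (Real.hasDerivAt_exp (-t)).comp t (hasDerivAt_neg t)
        have h3 := (((hasDerivAt_const t (1:ℝ)).sub (hasDerivAt_id t)).add
          (h2.div_const 2)).sub he
        exact h3.congr_deriv (by ring)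
      rw [hD.deriv]
      nlinarith [Real.add_one_le_exp (-t)]) y h0
  linarith

/-- for `y ≥ 0`: `1 - y + y²/2 - exp (-y) ≤ y³/6`. -/
lemma exp_neg_cubic {y : ℝ} (h0 : 0 ≤ y) :
    1 - y + y ^ 2 / 2 - Real.exp (-y) ≤ y ^ 3 / 6 := by
  have := aux_nonneg_of_deriv
    (fun t => t ^ 3 / 6 - (1 - t + t ^ 2 / 2 - Real.exp (-t)))
    (by fun_prop) (by simp)
    (fun t ht => by
      have h1 : HasDerivAt (fun t : ℝ => t ^ 3) (3 * t ^ 2) t := by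
        simpa using hasDerivAt_pow 3 t
      have h2 : HasDerivAt (fun t : ℝ => t ^ 2) (2 * t) t := by
        simpa using hasDerivAt_pow 2 t
      have he : HasDerivAt (fun t : ℝ => Real.exp (-t)) (-Real.exp (-t)) t := by
        simpa [Function.comp_def] using (Real.hasDerivAt_exp (-t)).comp t (hasDerivAt_neg t)
      have hD : HasDerivAt (fun t : ℝ => t ^ 3 / 6 - (1 - t + t ^ 2 / 2 - Real.exp (-t)))
          (t ^ 2 / 2 - (1 - t + t ^ 2 / 2 - Real.exp (-t)) - t ^ 2 / 2 + (1 - t + t ^ 2 / 2 - Real.exp (-t)) + t ^ 2 / 2 + 1 - t - Real.exp (-t)) t := by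
        have h3 := (h1.div_const 6).sub
          (((((hasDerivAt_const t (1:ℝ)).sub (hasDerivAt_id t)).add (h2.div_const 2)).sub he))
        exact h3.congr_deriv (by ring)
      rw [hD.deriv]
      have := exp_neg_le_quad ht.le
      nlinarith) y h0
  linarith

/-- Combined cubic bound for all `|x| ≤ B` (with `0 ≤ B`). -/
lemma exp_cubic_abs (B : ℝ) (hB : 0 ≤ B) {x : ℝ} (hx : |x| ≤ B) :
    |Real.exp x - 1 - x - x ^ 2 / 2| ≤ Real.exp B * |x| ^ 3 / 6 := by
  rcases le_or_gt 0 x with h0 | h0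
  · rw [abs_of_nonneg h0]
    have hxB : x ≤ B := le_trans (le_abs_self x) hx
    have h1 := exp_cubic_le B h0 hxB
    have h2 := exp_ge_quad h0
    rw [abs_of_nonneg (by linarith)]
    exact h1
  · set y := -x with hy
    have hy0 : 0 ≤ y := by simp [hy]; linarith
    have h1 : Real.exp x - 1 - x - x ^ 2 / 2 = -(1 - y + y ^ 2 / 2 - Real.exp (-y)) := by
      simp [hy]; ring
    have h2 := exp_neg_le_quad hy0
    have h3 := exp_neg_cubic hy0
    rw [h1, abs_neg, abs_of_nonneg (by linarith)]
    have hxa : |x| = y := by rw [abs_of_neg h0]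
    rw [hxa]
    have hexpB : 1 ≤ Real.exp B := Real.one_le_exp hB
    nlinarith [pow_nonneg hy0 3]


/-- Quadratic expansion of KL under a small centered log-shift: there is a
constant `C` (depending only on a lower bound `qmin` on the masses of `Q` and an
a priori bound `B` on `‖s‖_∞`) such that
`|KL(Q‖Q_s) - (1/2) E_Q[s²]| ≤ C (E_Q[s²])^{3/2}`. -/
theorem kl_quadratic_expansion {α : Type*} [Fintype α] [Nonempty α]
    (qmin B : ℝ) (hqmin : 0 < qmin) (hB : 0 < B) :
    ∃ C : ℝ, ∀ q s : α → ℝ,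
      (∀ a, qmin ≤ q a) → (∑ a, q a = 1) →
      (∑ a, q a * s a = 0) → (∀ a, |s a| ≤ B) →
      |(∑ a, q a * Real.log (q a /
            (q a * Real.exp (s a) / (∑ b, q b * Real.exp (s b)))))
          - (1 / 2) * (∑ a, q a * (s a) ^ 2)|
        ≤ C * (∑ a, q a * (s a) ^ 2) ^ ((3 : ℝ) / 2) := by
  set sq := Real.sqrt qmin with hsq
  have hsqpos : 0 < sq := Real.sqrt_pos.2 hqmin
  set eB := Real.exp B with heB
  have heBpos : 0 < eB := Real.exp_pos B
  have heB1 : 1 ≤ eB := Real.one_le_exp hB.le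
  set c1 : ℝ := 1 / 2 + eB / 6 * B / sq with hc1
  refine ⟨eB / (6 * sq) + eB * c1 ^ 2 * B, ?_⟩
  intro q s hq hsum hcent hsB
  have hqpos : ∀ a, 0 < q a := fun a => lt_of_lt_of_le hqmin (hq a)
  set V : ℝ := ∑ a, q a * (s a) ^ 2 with hV
  set Z : ℝ := ∑ b, q b * Real.exp (s b) with hZ
  have hVnn : 0 ≤ V := Finset.sum_nonneg fun a _ =>
    mul_nonneg (hqpos a).le (sq_nonneg _)
  have hZpos : 0 < Z := Finset.sum_pos
    (fun a _ => mul_pos (hqpos a) (Real.exp_pos _)) Finset.univ_nonempty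
  -- Step 1: the KL sum equals log Z
  have hKL : (∑ a, q a * Real.log (q a / (q a * Real.exp (s a) / Z))) = Real.log Z := by
    have hterm : ∀ a ∈ Finset.univ, q a * Real.log (q a / (q a * Real.exp (s a) / Z))
        = q a * Real.log Z - q a * s a := by
      intro a _
      have hqa := (hqpos a).ne'
      have harg : q a / (q a * Real.exp (s a) / Z) = Z / Real.exp (s a) := by
        field_simp
      rw [harg, Real.log_div hZpos.ne' (Real.exp_ne_zero _), Real.log_exp]
      ring
    rw [Finset.sum_congr rfl hterm, Finset.sum_sub_distrib, ← Finset.sum_mul, hsum, hcent]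
    ring
  rw [hKL]
  -- Step 2: handle V = 0
  rcases eq_or_lt_of_le hVnn with hV0 | hVpos
  · have hs0 : ∀ a, s a = 0 := by
      intro a
      have := (Finset.sum_eq_zero_iff_of_nonneg
        (fun a _ => mul_nonneg (hqpos a).le (sq_nonneg (s a)))).1 hV0.symm a (Finset.mem_univ a)
      have := mul_eq_zero.1 this
      rcases this with h | h
      · exact absurd h (hqpos a).ne'
      · exact pow_eq_zero_iff (n := 2) (by norm_num) |>.1 h
    have hZ1 : Z = 1 := by
      rw [hZ]
      simp only [hs0, Real.exp_zero, mul_one]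
      exact hsum
    rw [← hV0, hZ1, Real.zero_rpow (by norm_num), Real.log_one]
    simp
  -- Step 3: main estimate, V > 0
  have hsqrtV : 0 < Real.sqrt V := Real.sqrt_pos.2 hVpos
  have hV32 : V ^ ((3:ℝ)/2) = V * Real.sqrt V := by
    rw [show ((3:ℝ)/2) = 1 + 1/2 by norm_num, Real.rpow_add hVpos, Real.rpow_one,
      Real.sqrt_eq_rpow]
  rw [hV32]
  -- pointwise bound on |s a|
  have hsa : ∀ a, |s a| ≤ Real.sqrt V / sq := by
    intro a
    have h1 : qmin * (s a) ^ 2 ≤ V := by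
      calc qmin * (s a) ^ 2 ≤ q a * (s a) ^ 2 :=
            mul_le_mul_of_nonneg_right (hq a) (sq_nonneg _)
        _ ≤ V := Finset.single_le_sum
            (fun a _ => mul_nonneg (hqpos a).le (sq_nonneg _)) (Finset.mem_univ a)
    have h2 : (s a) ^ 2 ≤ V / qmin := by
      rw [le_div_iff₀ hqmin]; linarith
    have h3 : |s a| = Real.sqrt ((s a)^2) := (Real.sqrt_sq_eq_abs _).symm
    rw [h3, show Real.sqrt V / sq = Real.sqrt (V / qmin) by
      rw [Real.sqrt_div' V hqmin.le] <;> rw [Real.sqrt_div hVnn] <;> rfl]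
    exact Real.sqrt_le_sqrt h2
  -- cubic moment bound
  have hcube : ∑ a, q a * |s a| ^ 3 ≤ (Real.sqrt V / sq) * V := by
    calc ∑ a, q a * |s a| ^ 3 ≤ ∑ a, (Real.sqrt V / sq) * (q a * (s a) ^ 2) := by
          apply Finset.sum_le_sum
          intro a _
          have : q a * |s a| ^ 3 = |s a| * (q a * (s a)^2) := by
            rw [show |s a| ^ 3 = |s a| * |s a|^2 by ring, sq_abs]; ring
          rw [this]
          exact mul_le_mul_of_nonneg_right (hsa a)
            (mul_nonneg (hqpos a).le (sq_nonneg _))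
      _ = (Real.sqrt V / sq) * V := by rw [← Finset.mul_sum]
  -- |Z - 1 - V/2| bound
  have hZexp : |Z - 1 - V / 2| ≤ eB / 6 * ((Real.sqrt V / sq) * V) := by
    have hrw : Z - 1 - V / 2 = ∑ a, q a * (Real.exp (s a) - 1 - s a - (s a)^2 / 2) := by
      have : ∑ a, q a * (Real.exp (s a) - 1 - s a - (s a)^2 / 2)
          = Z - (∑ a, q a) - (∑ a, q a * s a) - (∑ a, q a * (s a)^2) / 2 := by
        rw [hZ, ← Finset.sum_sub_distrib, ← Finset.sum_sub_distrib, Finset.sum_div,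
          ← Finset.sum_sub_distrib]
        apply Finset.sum_congr rfl
        intro a _
        ring
      rw [this, hsum, hcent, ← hV]
      ring
    rw [hrw]
    calc |∑ a, q a * (Real.exp (s a) - 1 - s a - (s a)^2 / 2)|
        ≤ ∑ a, |q a * (Real.exp (s a) - 1 - s a - (s a)^2 / 2)| :=
          Finset.abs_sum_le_sum_abs _ _
      _ ≤ ∑ a, q a * (eB * |s a| ^ 3 / 6) := by
          apply Finset.sum_le_sum
          intro a _
          rw [abs_mul, abs_of_pos (hqpos a)]
          exact mul_le_mul_of_nonneg_left (exp_cubic_abs B hB.le (hsB a)) (hqpos a).le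
      _ = eB / 6 * ∑ a, q a * |s a| ^ 3 := by
          rw [Finset.mul_sum]; apply Finset.sum_congr rfl; intro a _; ring
      _ ≤ eB / 6 * ((Real.sqrt V / sq) * V) := by
          apply mul_le_mul_of_nonneg_left hcube (by positivity)
  -- Z lower bound
  have hZlow : Real.exp (-B) ≤ Z := by
    calc Real.exp (-B) = ∑ a, q a * Real.exp (-B) := by
          rw [← Finset.sum_mul, hsum, one_mul]
      _ ≤ Z := Finset.sum_le_sum fun a _ => by
          apply mul_le_mul_of_nonneg_left _ (hqpos a).le
          apply Real.exp_le_exp.2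
          have := hsB a
          have := neg_abs_le (s a)
          linarith
  have hZinv : 1 / Z ≤ eB := by
    rw [div_le_iff₀ hZpos]
    calc (1:ℝ) = eB * Real.exp (-B) := by
          rw [heB, ← Real.exp_add]; simp
      _ ≤ eB * Z := mul_le_mul_of_nonneg_left hZlow heBpos.le
  -- log inequalities
  have hlog1 : Real.log Z ≤ Z - 1 := Real.log_le_sub_one_of_pos hZpos
  have hlog2 : Z - 1 - Real.log Z ≤ (Z - 1) ^ 2 / Z := by
    have h := Real.log_le_sub_one_of_pos (show (0:ℝ) < 1 / Z by positivity)
    rw [Real.log_div one_ne_zero hZpos.ne', Real.log_one] at h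
    have hid : (Z - 1)^2 / Z = Z - 2 + 1 / Z := by field_simp; ring
    rw [hid]
    linarith
  -- sqrt V ≤ B and V ≤ B^2
  have hsV : Real.sqrt V ≤ B := by
    have hVB : V ≤ B ^ 2 := by
      calc V ≤ ∑ a, q a * B ^ 2 := Finset.sum_le_sum fun a _ => by
            apply mul_le_mul_of_nonneg_left _ (hqpos a).le
            have := hsB a
            nlinarith [abs_nonneg (s a), sq_abs (s a)]
        _ = B ^ 2 := by rw [← Finset.sum_mul, hsum, one_mul]
    calc Real.sqrt V ≤ Real.sqrt (B ^ 2) := Real.sqrt_le_sqrt hVB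
      _ = B := Real.sqrt_sq hB.le
  -- |Z - 1| ≤ c1 * V
  have hZ1 : |Z - 1| ≤ c1 * V := by
    have h1 : |Z - 1| ≤ V / 2 + eB / 6 * ((Real.sqrt V / sq) * V) := by
      have ht : |Z - 1| ≤ |Z - 1 - V / 2| + |V / 2| := by
        calc |Z - 1| = |(Z - 1 - V / 2) + V / 2| := by ring_nf
          _ ≤ _ := abs_add_le _ _
      rw [abs_of_nonneg (by linarith : (0:ℝ) ≤ V / 2)] at ht
      linarith
    calc |Z - 1| ≤ V / 2 + eB / 6 * ((Real.sqrt V / sq) * V) := h1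
      _ ≤ c1 * V := by
          rw [hc1]
          have : eB / 6 * ((Real.sqrt V / sq) * V) ≤ eB / 6 * (B / sq) * V := by
            rw [mul_assoc (eB/6)]
            apply mul_le_mul_of_nonneg_left _ (by positivity)
            apply mul_le_mul_of_nonneg_right _ hVnn
            exact by gcongr
          ring_nf
          ring_nf at this
          linarith
  -- final assembly
  have hsq1 : (Z - 1)^2 ≤ c1^2 * (B * (V * Real.sqrt V)) := by
    have h1 : (Z-1)^2 ≤ (c1 * V)^2 := by
      rw [← sq_abs (Z - 1)]
      apply pow_le_pow_left₀ (abs_nonneg _) hZ1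
    have h2 : (c1 * V)^2 = c1^2 * (V * V) := by ring
    have h3 : V * V = (Real.sqrt V * Real.sqrt V) * V := by
      rw [Real.mul_self_sqrt hVnn]
    have h4 : (Real.sqrt V * Real.sqrt V) * V ≤ B * (V * Real.sqrt V) := by
      have := mul_le_mul_of_nonneg_right hsV (mul_nonneg hsqrtV.le hVnn)
      calc Real.sqrt V * Real.sqrt V * V = Real.sqrt V * (Real.sqrt V * V) := by ring
        _ ≤ B * (Real.sqrt V * V) :=
            mul_le_mul_of_nonneg_right hsV (mul_nonneg hsqrtV.le hVnn)
        _ = B * (V * Real.sqrt V) := by ring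
    have hc1nn : 0 ≤ c1 := by positivity
    calc (Z-1)^2 ≤ c1^2 * (V * V) := by rw [← h2]; exact h1
      _ = c1^2 * ((Real.sqrt V * Real.sqrt V) * V) := by rw [← h3]
      _ ≤ c1^2 * (B * (V * Real.sqrt V)) :=
          mul_le_mul_of_nonneg_left h4 (sq_nonneg c1)
  have hfinal1 : |Real.log Z - V / 2| ≤ |Z - 1 - V/2| + (Z - 1 - Real.log Z) := by
    have : Real.log Z - V/2 = (Z - 1 - V/2) - (Z - 1 - Real.log Z) := by ring
    rw [this]
    calc |(Z - 1 - V/2) - (Z - 1 - Real.log Z)| ≤ |Z - 1 - V/2| + |Z - 1 - Real.log Z| :=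
          abs_sub _ _
      _ = |Z - 1 - V/2| + (Z - 1 - Real.log Z) := by
          rw [abs_of_nonneg (show (0:ℝ) ≤ Z - 1 - Real.log Z by linarith)]
  have hlog3 : Z - 1 - Real.log Z ≤ eB * (c1^2 * (B * (V * Real.sqrt V))) := by
    calc Z - 1 - Real.log Z ≤ (Z-1)^2 / Z := hlog2
      _ = (Z-1)^2 * (1/Z) := by ring
      _ ≤ (Z-1)^2 * eB := mul_le_mul_of_nonneg_left hZinv (sq_nonneg _)
      _ ≤ (c1^2 * (B * (V * Real.sqrt V))) * eB :=
          mul_le_mul_of_nonneg_right hsq1 heBpos.le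
      _ = eB * (c1^2 * (B * (V * Real.sqrt V))) := by ring
  have hZexp' : |Z - 1 - V/2| ≤ eB / (6 * sq) * (V * Real.sqrt V) := by
    calc |Z - 1 - V/2| ≤ eB / 6 * ((Real.sqrt V / sq) * V) := hZexp
      _ = eB / (6 * sq) * (V * Real.sqrt V) := by ring
  have := hfinal1.trans (add_le_add hZexp' hlog3)
  calc |Real.log Z - 1/2 * V| = |Real.log Z - V/2| := by ring_nf
    _ ≤ eB / (6 * sq) * (V * Real.sqrt V) + eB * (c1^2 * (B * (V * Real.sqrt V))) := this
    _ = (eB / (6 * sq) + eB * c1 ^ 2 * B) * (V * Real.sqrt V) := by ring
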